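/- For every subset G ⊆ [n] with |G| ≥ 2, the chain γ_G is a cycle: ∂(γ_G) = 0 in the ℤ/2 cubical chain complex of Ω_n. -/
import Mathlib


structure Cube where
  A : Finset ℕ
  B : Finset ℕ
  C : Finset ℕ
  D : Finset ℕ
deriving DecidableEq

def IsCube (n : ℕ) (σ : Cube) : Prop :=
  Disjoint σ.A σ.B ∧ Disjoint σ.A σ.C ∧ Disjoint σ.A σ.D ∧
  Disjoint σ.B σ.C ∧ Disjoint σ.B σ.D ∧ Disjoint σ.C σ.D ∧
  σ.A ∪ σ.B ∪ σ.C ∪ σ.D = Finset.Icc 1 n ∧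
  σ.A.Nonempty ∧ σ.C.Nonempty

def Cube.dim (σ : Cube) : ℕ := σ.B.card + σ.D.card

/-- The free `ℤ/2`-vector space on all (potential) cubes. -/
abbrev Chain := Cube →₀ ZMod 2

/-- The value of the cubical boundary operator on a single cube. -/
noncomputable def bnd1 (σ : Cube) : Chain :=
  (σ.B.sum fun x =>
      Finsupp.single ⟨insert x σ.A, σ.B.erase x, σ.C, σ.D⟩ 1
    + Finsupp.single ⟨σ.A, σ.B.erase x, insert x σ.C, σ.D⟩ 1)
  + (σ.D.sum fun x =>
      Finsupp.single ⟨insert x σ.A, σ.B, σ.C, σ.D.erase x⟩ 1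
    + Finsupp.single ⟨σ.A, σ.B, insert x σ.C, σ.D.erase x⟩ 1)

/-- The boundary operator of the `ℤ/2` cubical chain complex, extended linearly. -/
noncomputable def bnd : Chain →ₗ[ZMod 2] Chain :=
  Finsupp.linearCombination (ZMod 2) bnd1

/-- The subspace of chains supported on cubes of `Ω_n` of dimension `d`
(the chain group `C_d`). -/
noncomputable def degChains (n d : ℕ) : Submodule (ZMod 2) Chain where
  carrier := {c | ∀ σ ∈ c.support, IsCube n σ ∧ σ.dim = d}
  add_mem' := by
    intro a b ha hb σ hσ
    rcases Finset.mem_union.mp (Finsupp.support_add hσ) with h | h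
    exacts [ha σ h, hb σ h]
  zero_mem' := by intro σ hσ; simp at hσ
  smul_mem' := by intro r c hc σ hσ; exact hc σ (Finsupp.support_smul hσ)

/-- The subspace of `d`-dimensional cycles, `ker ∂_d`. -/
noncomputable def cycles (n d : ℕ) : Submodule (ZMod 2) Chain :=
  degChains n d ⊓ LinearMap.ker bnd

/-- The subspace of `d`-dimensional boundaries, `im ∂_{d+1}`. -/
noncomputable def boundaries (n d : ℕ) : Submodule (ZMod 2) Chain :=
  Submodule.map bnd (degChains n (d + 1))

/-- The boundaries, viewed inside the cycles. -/
noncomputable def boundariesIn (n d : ℕ) : Submodule (ZMod 2) (cycles n d) :=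
  (boundaries n d).comap (cycles n d).subtype

/-- The `d`-th homology of `Ω_n` over `ℤ/2`: `ker ∂_d / im ∂_{d+1}`. -/
abbrev Homology (n d : ℕ) := cycles n d ⧸ boundariesIn n d

/-- The cycle `ρ_{A,C}`: the sum of all cubes `(A,B,C,D)` with `B ∪ D = [n] ∖ (A ∪ C)`. -/
noncomputable def rho (n : ℕ) (A C : Finset ℕ) : Chain :=
  (Finset.Icc 1 n \ (A ∪ C)).powerset.sum fun B =>
    Finsupp.single ⟨A, B, C, (Finset.Icc 1 n \ (A ∪ C)) \ B⟩ 1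

/-- The cycle `γ_G`: the sum of all cubes `({i},B,{j},D)` with `i, j ∈ [a,c]`,
`D ⊆ I ∪ E` and `B ⊆ G ∪ E`, where `a = min G`, `c = max G`, `E = [n] ∖ [a,c]`,
`I = [a,c] ∖ G`. -/
noncomputable def gamma (n : ℕ) (G : Finset ℕ) : Chain :=
  let a := sInf (↑G : Set ℕ)
  let c := sSup (↑G : Set ℕ)
  let E := Finset.Icc 1 n \ Finset.Icc a c
  let I := Finset.Icc a c \ G
  ∑ i ∈ Finset.Icc a c, ∑ j ∈ Finset.Icc a c, ∑ D ∈ (I ∪ E).powerset,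
    if i ≠ j ∧ i ∉ D ∧ j ∉ D ∧ Finset.Icc 1 n \ ({i} ∪ {j} ∪ D) ⊆ G ∪ E then
      Finsupp.single ⟨{i}, Finset.Icc 1 n \ ({i} ∪ {j} ∪ D), {j}, D⟩ 1
    else 0

-- Auxiliary definitions and lemmas

def Bset (n i j : ℕ) (D : Finset ℕ) : Finset ℕ := Finset.Icc 1 n \ ({i} ∪ {j} ∪ D)

def gcond (n : ℕ) (G K : Finset ℕ) (i j : ℕ) (D : Finset ℕ) : Prop :=
  i ∈ K ∧ j ∈ K ∧ (∀ y ∈ D, y ∈ Finset.Icc 1 n ∧ y ∉ G) ∧ i ≠ j ∧ i ∉ D ∧ j ∉ D ∧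
    ∀ y ∈ K, y ∉ G → y = i ∨ y = j ∨ y ∈ D

instance (n : ℕ) (G K : Finset ℕ) (i j : ℕ) (D : Finset ℕ) : Decidable (gcond n G K i j D) := by
  unfold gcond; infer_instance

def gfcond (n : ℕ) (G K : Finset ℕ) (i j : ℕ) (D : Finset ℕ) (x : ℕ) (d : Bool) : Prop :=
  gcond n G K i j D ∧ (if d then x ∈ D else x ∈ Bset n i j D)

instance (n : ℕ) (G K : Finset ℕ) (i j : ℕ) (D : Finset ℕ) (x : ℕ) (d : Bool) :
    Decidable (gfcond n G K i j D x d) := by unfold gfcond; infer_instance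

def face (n i j : ℕ) (D : Finset ℕ) (x : ℕ) (s d : Bool) : Cube :=
  match s, d with
  | false, false => ⟨insert x {i}, (Bset n i j D).erase x, {j}, D⟩
  | true, false => ⟨{i}, (Bset n i j D).erase x, insert x {j}, D⟩
  | false, true => ⟨insert x {i}, Bset n i j D, {j}, D.erase x⟩
  | true, true => ⟨{i}, Bset n i j D, insert x {j}, D.erase x⟩

noncomputable def ff (n : ℕ) (G K : Finset ℕ) (i j : ℕ) (D : Finset ℕ) (x : ℕ) (s d : Bool) : Chain :=
  if gfcond n G K i j D x d then Finsupp.single (face n i j D x s d) 1 else 0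

def ptr (G K : Finset ℕ) (i j : ℕ) (D : Finset ℕ) (x : ℕ) (s d : Bool) :
    ℕ × ℕ × Finset ℕ × ℕ × Bool × Bool :=
  if x ∈ K then
    if s then
      if j ∈ G then (i, x, if d then D.erase x else D, j, true, false)
      else (i, x, insert j (if d then D.erase x else D), j, true, true)
    else
      if i ∈ G then (x, j, if d then D.erase x else D, i, false, false)
      else (x, j, insert i (if d then D.erase x else D), i, false, true)
  else (i, j, if d then D.erase x else insert x D, x, s, !d)

set_option maxHeartbeats 2000000 in
lemma key (n : ℕ) (G K : Finset ℕ) (hGK : G ⊆ K) (hK : K ⊆ Finset.Icc 1 n)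
    (i j : ℕ) (D : Finset ℕ) (x : ℕ) (s d : Bool)
    (h : gfcond n G K i j D x d) :
    ∀ i' j' D' x' s' d', ptr G K i j D x s d = (i', j', D', x', s', d') →
      ((i', j', D', x', s', d') ≠ (i, j, D, x, s, d) ∧
       gfcond n G K i' j' D' x' d' ∧
       face n i' j' D' x' s' d' = face n i j D x s d ∧
       ptr G K i' j' D' x' s' d' = (i, j, D, x, s, d)) := by
  obtain ⟨⟨hiK, hjK, hDIE, hij, hiD, hjD, hIB⟩, hx⟩ := h
  have hiI : i ∈ Finset.Icc 1 n := hK hiK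
  have hjI : j ∈ Finset.Icc 1 n := hK hjK
  intro i' j' D' x' s' d' heq
  cases d with
  | false =>
    replace hx : x ∈ Bset n i j D := hx
    rw [Bset, Finset.mem_sdiff, Finset.mem_union, Finset.mem_union, Finset.mem_singleton,
      Finset.mem_singleton] at hx
    obtain ⟨hxI, hxd⟩ := hx
    push_neg at hxd
    obtain ⟨⟨hxi, hxj⟩, hxD⟩ := hxd
    by_cases hxK : x ∈ K
    · have hxG : x ∈ G := by
        by_contra hxG
        rcases hIB x hxK hxG with h1 | h1 | h1 <;> tauto
      cases s with
      | false =>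
        by_cases hiG : i ∈ G
        · -- partner (x, j, D, i, false, false)
          have hp : ptr G K i j D x false false = (x, j, D, i, false, false) := by
            simp [ptr, hxK, hiG]
          rw [hp] at heq
          simp only [Prod.mk.injEq] at heq
          obtain ⟨rfl, rfl, rfl, rfl, rfl, rfl⟩ := heq
          refine ⟨?_, ⟨⟨hxK, hjK, hDIE, hxj, hxD, hjD, ?_⟩, ?_⟩, ?_, ?_⟩
          · simp only [ne_eq, Prod.mk.injEq]; tauto
          · intro y hy hyG
            rcases hIB y hy hyG with h1 | h1 | h1
            · exact absurd (h1 ▸ hiG) hyG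
            · tauto
            · tauto
          · show i ∈ Bset n x j D
            rw [Bset, Finset.mem_sdiff]
            refine ⟨hiI, ?_⟩
            simp only [Finset.mem_union, Finset.mem_singleton]
            push_neg
            exact ⟨⟨fun h => hxi h.symm, hij⟩, hiD⟩
          · have e1 : insert i ({x} : Finset ℕ) = insert x {i} := by
              ext y; simp only [Finset.mem_insert, Finset.mem_singleton]; tauto
            have e2 : (Bset n x j D).erase i = (Bset n i j D).erase x := by
              ext y
              simp only [Bset, Finset.mem_erase, Finset.mem_sdiff, Finset.mem_union,
                Finset.mem_singleton]
              tauto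
            simp [face, e1, e2]
          · simp [ptr, hiK, hxG]
        · -- partner (x, j, insert i D, i, false, true)
          have hp : ptr G K i j D x false false = (x, j, insert i D, i, false, true) := by
            simp [ptr, hxK, hiG]
          rw [hp] at heq
          simp only [Prod.mk.injEq] at heq
          obtain ⟨rfl, rfl, rfl, rfl, rfl, rfl⟩ := heq
          refine ⟨?_, ⟨⟨hxK, hjK, ?_, hxj, ?_, ?_, ?_⟩, ?_⟩, ?_, ?_⟩
          · simp only [ne_eq, Prod.mk.injEq]; tauto
          · intro y hy
            rcases Finset.mem_insert.mp hy with rfl | hy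
            · exact ⟨hiI, hiG⟩
            · exact hDIE y hy
          · simp only [Finset.mem_insert]; push_neg; exact ⟨hxi, hxD⟩
          · simp only [Finset.mem_insert]; push_neg; exact ⟨fun h => hij h.symm, hjD⟩
          · intro y hy hyG
            rcases hIB y hy hyG with h1 | h1 | h1
            · subst h1; simp
            · tauto
            · simp [Finset.mem_insert, h1]
          · show i ∈ insert i D
            exact Finset.mem_insert_self i D
          · have e1 : insert i ({x} : Finset ℕ) = insert x {i} := by
              ext y; simp only [Finset.mem_insert, Finset.mem_singleton]; tauto
            have e2 : Bset n x j (insert i D) = (Bset n i j D).erase x := by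
              ext y
              simp only [Bset, Finset.mem_erase, Finset.mem_sdiff, Finset.mem_union,
                Finset.mem_singleton, Finset.mem_insert]
              tauto
            simp [face, e1, e2, Finset.erase_insert hiD]
          · simp [ptr, hiK, hxG, Finset.erase_insert hiD]
      | true =>
        by_cases hjG : j ∈ G
        · -- partner (i, x, D, j, true, false)
          have hp : ptr G K i j D x true false = (i, x, D, j, true, false) := by
            simp [ptr, hxK, hjG]
          rw [hp] at heq
          simp only [Prod.mk.injEq] at heq
          obtain ⟨rfl, rfl, rfl, rfl, rfl, rfl⟩ := heq
          refine ⟨?_, ⟨⟨hiK, hxK, hDIE, fun h => hxi h.symm, hiD, hxD, ?_⟩, ?_⟩, ?_, ?_⟩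
          · simp only [ne_eq, Prod.mk.injEq]; tauto
          · intro y hy hyG
            rcases hIB y hy hyG with h1 | h1 | h1
            · tauto
            · exact absurd (h1 ▸ hjG) hyG
            · tauto
          · show j ∈ Bset n i x D
            rw [Bset, Finset.mem_sdiff]
            refine ⟨hjI, ?_⟩
            simp only [Finset.mem_union, Finset.mem_singleton]
            push_neg
            exact ⟨⟨fun h => hij h.symm, fun h => hxj h.symm⟩, hjD⟩
          · have e1 : insert j ({x} : Finset ℕ) = insert x {j} := by
              ext y; simp only [Finset.mem_insert, Finset.mem_singleton]; tauto
            have e2 : (Bset n i x D).erase j = (Bset n i j D).erase x := by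
              ext y
              simp only [Bset, Finset.mem_erase, Finset.mem_sdiff, Finset.mem_union,
                Finset.mem_singleton]
              tauto
            simp [face, e1, e2]
          · simp [ptr, hjK, hxG]
        · -- partner (i, x, insert j D, j, true, true)
          have hp : ptr G K i j D x true false = (i, x, insert j D, j, true, true) := by
            simp [ptr, hxK, hjG]
          rw [hp] at heq
          simp only [Prod.mk.injEq] at heq
          obtain ⟨rfl, rfl, rfl, rfl, rfl, rfl⟩ := heq
          refine ⟨?_, ⟨⟨hiK, hxK, ?_, fun h => hxi h.symm, ?_, ?_, ?_⟩, ?_⟩, ?_, ?_⟩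
          · simp only [ne_eq, Prod.mk.injEq]; tauto
          · intro y hy
            rcases Finset.mem_insert.mp hy with rfl | hy
            · exact ⟨hjI, hjG⟩
            · exact hDIE y hy
          · simp only [Finset.mem_insert]; push_neg; exact ⟨hij, hiD⟩
          · simp only [Finset.mem_insert]; push_neg; exact ⟨hxj, hxD⟩
          · intro y hy hyG
            rcases hIB y hy hyG with h1 | h1 | h1
            · tauto
            · subst h1; simp
            · simp [Finset.mem_insert, h1]
          · show j ∈ insert j D
            exact Finset.mem_insert_self j D
          · have e1 : insert j ({x} : Finset ℕ) = insert x {j} := by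
              ext y; simp only [Finset.mem_insert, Finset.mem_singleton]; tauto
            have e2 : Bset n i x (insert j D) = (Bset n i j D).erase x := by
              ext y
              simp only [Bset, Finset.mem_erase, Finset.mem_sdiff, Finset.mem_union,
                Finset.mem_singleton, Finset.mem_insert]
              tauto
            simp [face, e1, e2, Finset.erase_insert hjD]
          · simp [ptr, hjK, hxG, Finset.erase_insert hjD]
    · -- E-case, d = false: partner (i, j, insert x D, x, s, true)
      have hxG' : x ∉ G := fun h => hxK (hGK h)
      have hp : ptr G K i j D x s false = (i, j, insert x D, x, s, true) := by
        simp [ptr, hxK]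
      rw [hp] at heq
      simp only [Prod.mk.injEq] at heq
      obtain ⟨rfl, rfl, rfl, rfl, rfl, rfl⟩ := heq
      refine ⟨?_, ⟨⟨hiK, hjK, ?_, hij, ?_, ?_, ?_⟩, ?_⟩, ?_, ?_⟩
      · simp
      · intro y hy
        rcases Finset.mem_insert.mp hy with rfl | hy
        · exact ⟨hxI, hxG'⟩
        · exact hDIE y hy
      · simp only [Finset.mem_insert]; push_neg; exact ⟨fun h => hxi h.symm, hiD⟩
      · simp only [Finset.mem_insert]; push_neg; exact ⟨fun h => hxj h.symm, hjD⟩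
      · intro y hy hyG
        rcases hIB y hy hyG with h1 | h1 | h1
        · tauto
        · tauto
        · simp [Finset.mem_insert, h1]
      · show x ∈ insert x D
        exact Finset.mem_insert_self x D
      · have e2 : Bset n i j (insert x D) = (Bset n i j D).erase x := by
          ext y
          simp only [Bset, Finset.mem_erase, Finset.mem_sdiff, Finset.mem_union,
            Finset.mem_singleton, Finset.mem_insert]
          tauto
        cases s <;> simp [face, e2, Finset.erase_insert hxD]
      · simp [ptr, hxK, Finset.erase_insert hxD]
  | true =>
    replace hx : x ∈ D := hx
    obtain ⟨hxI, hxG'⟩ := hDIE x hx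
    have hxi : x ≠ i := fun h => hiD (h ▸ hx)
    have hxj : x ≠ j := fun h => hjD (h ▸ hx)
    have hiDx : i ∉ D.erase x := fun h => hiD (Finset.mem_of_mem_erase h)
    have hjDx : j ∉ D.erase x := fun h => hjD (Finset.mem_of_mem_erase h)
    by_cases hxK : x ∈ K
    · cases s with
      | false =>
        by_cases hiG : i ∈ G
        · -- partner (x, j, D.erase x, i, false, false)
          have hp : ptr G K i j D x false true = (x, j, D.erase x, i, false, false) := by
            simp [ptr, hxK, hiG]
          rw [hp] at heq
          simp only [Prod.mk.injEq] at heq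
          obtain ⟨rfl, rfl, rfl, rfl, rfl, rfl⟩ := heq
          refine ⟨?_, ⟨⟨hxK, hjK, fun y hy => hDIE y (Finset.mem_of_mem_erase hy), hxj,
              Finset.notMem_erase x D, hjDx, ?_⟩, ?_⟩, ?_, ?_⟩
          · simp only [ne_eq, Prod.mk.injEq]; tauto
          · intro y hy hyG
            rcases hIB y hy hyG with h1 | h1 | h1
            · exact absurd (h1 ▸ hiG) hyG
            · tauto
            · rcases eq_or_ne y x with rfl | hyx
              · exact Or.inl rfl
              · exact Or.inr (Or.inr (Finset.mem_erase.mpr ⟨hyx, h1⟩))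
          · show i ∈ Bset n x j (D.erase x)
            rw [Bset, Finset.mem_sdiff]
            refine ⟨hiI, ?_⟩
            simp only [Finset.mem_union, Finset.mem_singleton]
            push_neg
            exact ⟨⟨fun h => hxi h.symm, hij⟩, hiDx⟩
          · have e1 : insert i ({x} : Finset ℕ) = insert x {i} := by
              ext y; simp only [Finset.mem_insert, Finset.mem_singleton]; tauto
            have e2 : (Bset n x j (D.erase x)).erase i = Bset n i j D := by
              ext y
              simp only [Bset, Finset.mem_erase, Finset.mem_sdiff, Finset.mem_union,
                Finset.mem_singleton]
              by_cases hyx : y = x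
              · subst hyx; tauto
              · tauto
            simp [face, e1, e2]
          · simp [ptr, hiK, hxG', Finset.insert_erase hx]
        · -- partner (x, j, insert i (D.erase x), i, false, true)
          have hp : ptr G K i j D x false true = (x, j, insert i (D.erase x), i, false, true) := by
            simp [ptr, hxK, hiG]
          rw [hp] at heq
          simp only [Prod.mk.injEq] at heq
          obtain ⟨rfl, rfl, rfl, rfl, rfl, rfl⟩ := heq
          refine ⟨?_, ⟨⟨hxK, hjK, ?_, hxj, ?_, ?_, ?_⟩, ?_⟩, ?_, ?_⟩
          · simp only [ne_eq, Prod.mk.injEq]; tauto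
          · intro y hy
            rcases Finset.mem_insert.mp hy with rfl | hy
            · exact ⟨hiI, hiG⟩
            · exact hDIE y (Finset.mem_of_mem_erase hy)
          · simp only [Finset.mem_insert]; push_neg
            exact ⟨hxi, Finset.notMem_erase x D⟩
          · simp only [Finset.mem_insert]; push_neg
            exact ⟨fun h => hij h.symm, hjDx⟩
          · intro y hy hyG
            rcases hIB y hy hyG with h1 | h1 | h1
            · subst h1; simp
            · tauto
            · rcases eq_or_ne y x with rfl | hyx
              · exact Or.inl rfl
              · exact Or.inr (Or.inr (Finset.mem_insert.mpr
                  (Or.inr (Finset.mem_erase.mpr ⟨hyx, h1⟩))))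
          · show i ∈ insert i (D.erase x)
            exact Finset.mem_insert_self _ _
          · have e1 : insert i ({x} : Finset ℕ) = insert x {i} := by
              ext y; simp only [Finset.mem_insert, Finset.mem_singleton]; tauto
            have e2 : Bset n x j (insert i (D.erase x)) = Bset n i j D := by
              ext y
              simp only [Bset, Finset.mem_erase, Finset.mem_sdiff, Finset.mem_union,
                Finset.mem_singleton, Finset.mem_insert]
              by_cases hyx : y = x
              · subst hyx; tauto
              · tauto
            simp [face, e1, e2, Finset.erase_insert hiDx, Finset.insert_erase hx]
          · simp [ptr, hiK, hxG', Finset.erase_insert hiDx, Finset.insert_erase hx]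
      | true =>
        by_cases hjG : j ∈ G
        · -- partner (i, x, D.erase x, j, true, false)
          have hp : ptr G K i j D x true true = (i, x, D.erase x, j, true, false) := by
            simp [ptr, hxK, hjG]
          rw [hp] at heq
          simp only [Prod.mk.injEq] at heq
          obtain ⟨rfl, rfl, rfl, rfl, rfl, rfl⟩ := heq
          refine ⟨?_, ⟨⟨hiK, hxK, fun y hy => hDIE y (Finset.mem_of_mem_erase hy),
              fun h => hxi h.symm, hiDx, Finset.notMem_erase x D, ?_⟩, ?_⟩, ?_, ?_⟩
          · simp only [ne_eq, Prod.mk.injEq]; tauto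
          · intro y hy hyG
            rcases hIB y hy hyG with h1 | h1 | h1
            · tauto
            · exact absurd (h1 ▸ hjG) hyG
            · rcases eq_or_ne y x with rfl | hyx
              · exact Or.inr (Or.inl rfl)
              · exact Or.inr (Or.inr (Finset.mem_erase.mpr ⟨hyx, h1⟩))
          · show j ∈ Bset n i x (D.erase x)
            rw [Bset, Finset.mem_sdiff]
            refine ⟨hjI, ?_⟩
            simp only [Finset.mem_union, Finset.mem_singleton]
            push_neg
            exact ⟨⟨fun h => hij h.symm, fun h => hxj h.symm⟩, hjDx⟩
          · have e1 : insert j ({x} : Finset ℕ) = insert x {j} := by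
              ext y; simp only [Finset.mem_insert, Finset.mem_singleton]; tauto
            have e2 : (Bset n i x (D.erase x)).erase j = Bset n i j D := by
              ext y
              simp only [Bset, Finset.mem_erase, Finset.mem_sdiff, Finset.mem_union,
                Finset.mem_singleton]
              by_cases hyx : y = x
              · subst hyx; tauto
              · tauto
            simp [face, e1, e2]
          · simp [ptr, hjK, hxG', Finset.insert_erase hx]
        · -- partner (i, x, insert j (D.erase x), j, true, true)
          have hp : ptr G K i j D x true true = (i, x, insert j (D.erase x), j, true, true) := by
            simp [ptr, hxK, hjG]
          rw [hp] at heq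
          simp only [Prod.mk.injEq] at heq
          obtain ⟨rfl, rfl, rfl, rfl, rfl, rfl⟩ := heq
          refine ⟨?_, ⟨⟨hiK, hxK, ?_, fun h => hxi h.symm, ?_, ?_, ?_⟩, ?_⟩, ?_, ?_⟩
          · simp only [ne_eq, Prod.mk.injEq]; tauto
          · intro y hy
            rcases Finset.mem_insert.mp hy with rfl | hy
            · exact ⟨hjI, hjG⟩
            · exact hDIE y (Finset.mem_of_mem_erase hy)
          · simp only [Finset.mem_insert]; push_neg
            exact ⟨hij, hiDx⟩
          · simp only [Finset.mem_insert]; push_neg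
            exact ⟨hxj, Finset.notMem_erase x D⟩
          · intro y hy hyG
            rcases hIB y hy hyG with h1 | h1 | h1
            · tauto
            · subst h1; simp
            · rcases eq_or_ne y x with rfl | hyx
              · exact Or.inr (Or.inl rfl)
              · exact Or.inr (Or.inr (Finset.mem_insert.mpr
                  (Or.inr (Finset.mem_erase.mpr ⟨hyx, h1⟩))))
          · show j ∈ insert j (D.erase x)
            exact Finset.mem_insert_self _ _
          · have e1 : insert j ({x} : Finset ℕ) = insert x {j} := by
              ext y; simp only [Finset.mem_insert, Finset.mem_singleton]; tauto
            have e2 : Bset n i x (insert j (D.erase x)) = Bset n i j D := by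
              ext y
              simp only [Bset, Finset.mem_erase, Finset.mem_sdiff, Finset.mem_union,
                Finset.mem_singleton, Finset.mem_insert]
              by_cases hyx : y = x
              · subst hyx; tauto
              · tauto
            simp [face, e1, e2, Finset.erase_insert hjDx, Finset.insert_erase hx]
          · simp [ptr, hjK, hxG', Finset.erase_insert hjDx, Finset.insert_erase hx]
    · -- E-case, d = true: partner (i, j, D.erase x, x, s, false)
      have hp : ptr G K i j D x s true = (i, j, D.erase x, x, s, false) := by
        simp [ptr, hxK]
      rw [hp] at heq
      simp only [Prod.mk.injEq] at heq
      obtain ⟨rfl, rfl, rfl, rfl, rfl, rfl⟩ := heq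
      refine ⟨?_, ⟨⟨hiK, hjK, fun y hy => hDIE y (Finset.mem_of_mem_erase hy), hij,
          hiDx, hjDx, ?_⟩, ?_⟩, ?_, ?_⟩
      · simp
      · intro y hy hyG
        rcases hIB y hy hyG with h1 | h1 | h1
        · tauto
        · tauto
        · exact Or.inr (Or.inr (Finset.mem_erase.mpr ⟨fun hyx => hxK (hyx ▸ hy), h1⟩))
      · show x ∈ Bset n i j (D.erase x)
        rw [Bset, Finset.mem_sdiff]
        refine ⟨hxI, ?_⟩
        simp only [Finset.mem_union, Finset.mem_singleton]
        push_neg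
        exact ⟨⟨hxi, hxj⟩, Finset.notMem_erase x D⟩
      · have e2 : (Bset n i j (D.erase x)).erase x = Bset n i j D := by
          ext y
          simp only [Bset, Finset.mem_erase, Finset.mem_sdiff, Finset.mem_union,
            Finset.mem_singleton]
          by_cases hyx : y = x
          · subst hyx; tauto
          · tauto
        cases s <;> simp [face, e2]
      · simp [ptr, hxK, Finset.insert_erase hx]


lemma bnd_single (σ : Cube) : bnd (Finsupp.single σ 1) = bnd1 σ := by
  simp [bnd, Finsupp.linearCombination_single]

lemma mem_ranges (n : ℕ) (G K : Finset ℕ) (hK : K ⊆ Finset.Icc 1 n) {i j : ℕ} {D : Finset ℕ}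
    {x : ℕ} {d : Bool} (h : gfcond n G K i j D x d) :
    i ∈ Finset.Icc 1 n ∧ j ∈ Finset.Icc 1 n ∧ D ⊆ Finset.Icc 1 n ∧ x ∈ Finset.Icc 1 n := by
  obtain ⟨⟨hiK, hjK, hDIE, -, -, -, -⟩, hx⟩ := h
  refine ⟨hK hiK, hK hjK, fun y hy => (hDIE y hy).1, ?_⟩
  cases d with
  | false =>
    replace hx : x ∈ Bset n i j D := hx
    exact (Finset.mem_sdiff.mp hx).1
  | true =>
    replace hx : x ∈ D := hx
    exact (hDIE x hx).1

lemma gcond_D_sub {n : ℕ} {G K : Finset ℕ} {i j : ℕ} {D : Finset ℕ}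
    (h : gcond n G K i j D) : D ⊆ (K \ G) ∪ (Finset.Icc 1 n \ K) := by
  intro y hy
  obtain ⟨hyI, hyG⟩ := h.2.2.1 y hy
  rw [Finset.mem_union, Finset.mem_sdiff, Finset.mem_sdiff]
  by_cases hyK : y ∈ K
  · exact Or.inl ⟨hyK, hyG⟩
  · exact Or.inr ⟨hyI, hyK⟩

lemma cond_iff (n : ℕ) (G K : Finset ℕ) (hGK : G ⊆ K) (hK : K ⊆ Finset.Icc 1 n)
    (i j : ℕ) (D : Finset ℕ) (hi : i ∈ K) (hj : j ∈ K)
    (hD : D ⊆ (K \ G) ∪ (Finset.Icc 1 n \ K)) :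
    ((i ≠ j ∧ i ∉ D ∧ j ∉ D ∧ Finset.Icc 1 n \ ({i} ∪ {j} ∪ D) ⊆ G ∪
        (Finset.Icc 1 n \ K)) ↔ gcond n G K i j D) := by
  constructor
  · rintro ⟨h1, h2, h3, h4⟩
    refine ⟨hi, hj, ?_, h1, h2, h3, ?_⟩
    · intro y hy
      rcases Finset.mem_union.mp (hD hy) with h | h
      · exact ⟨hK (Finset.mem_sdiff.mp h).1, (Finset.mem_sdiff.mp h).2⟩
      · exact ⟨(Finset.mem_sdiff.mp h).1, fun hGmem => (Finset.mem_sdiff.mp h).2 (hGK hGmem)⟩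
    · intro y hyK hyG
      by_contra hcon
      push_neg at hcon
      have hyB : y ∈ Finset.Icc 1 n \ ({i} ∪ {j} ∪ D) := by
        rw [Finset.mem_sdiff]
        refine ⟨hK hyK, ?_⟩
        simp only [Finset.mem_union, Finset.mem_singleton]
        push_neg
        exact ⟨⟨hcon.1, hcon.2.1⟩, hcon.2.2⟩
      rcases Finset.mem_union.mp (h4 hyB) with h | h
      · exact hyG h
      · exact (Finset.mem_sdiff.mp h).2 hyK
  · rintro ⟨hiK, hjK, hDIE, hij, hiD, hjD, hIB⟩
    refine ⟨hij, hiD, hjD, ?_⟩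
    intro y hy
    rw [Finset.mem_sdiff] at hy
    obtain ⟨hyI, hyn⟩ := hy
    simp only [Finset.mem_union, Finset.mem_singleton] at hyn
    push_neg at hyn
    rw [Finset.mem_union]
    by_cases hyK : y ∈ K
    · by_cases hyG : y ∈ G
      · exact Or.inl hyG
      · rcases hIB y hyK hyG with h | h | h <;> tauto
    · exact Or.inr (Finset.mem_sdiff.mpr ⟨hyI, hyK⟩)

lemma expand (n : ℕ) (G K : Finset ℕ) (i j : ℕ) (D : Finset ℕ) :
    (if gcond n G K i j D then bnd1 ⟨{i}, Bset n i j D, {j}, D⟩ else 0) =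
    ∑ x ∈ Finset.Icc 1 n, ∑ sd : Bool × Bool, ff n G K i j D x sd.1 sd.2 := by
  have hsd : ∀ x : ℕ, (∑ sd : Bool × Bool, ff n G K i j D x sd.1 sd.2) =
      ff n G K i j D x false false + ff n G K i j D x true false +
      ff n G K i j D x false true + ff n G K i j D x true true := by
    intro x
    rw [Fintype.sum_prod_type]
    simp only [Fintype.sum_bool]
    abel
  simp only [hsd]
  by_cases hc : gcond n G K i j D
  · rw [if_pos hc]
    have hDsub : D ⊆ Finset.Icc 1 n := fun y hy => (hc.2.2.1 y hy).1
    have hBsub : Bset n i j D ⊆ Finset.Icc 1 n := Finset.sdiff_subset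
    have hf : ∀ (x : ℕ) (s : Bool), ff n G K i j D x s false =
        if x ∈ Bset n i j D then Finsupp.single (face n i j D x s false) 1 else 0 := by
      intro x s
      rw [ff]
      by_cases h : x ∈ Bset n i j D
      · rw [if_pos ⟨hc, h⟩, if_pos h]
      · rw [if_neg (fun hh => h hh.2), if_neg h]
    have hg : ∀ (x : ℕ) (s : Bool), ff n G K i j D x s true =
        if x ∈ D then Finsupp.single (face n i j D x s true) 1 else 0 := by
      intro x s
      rw [ff]
      by_cases h : x ∈ D
      · rw [if_pos ⟨hc, h⟩, if_pos h]
      · rw [if_neg (fun hh => h hh.2), if_neg h]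
    simp only [hf, hg]
    rw [Finset.sum_add_distrib, Finset.sum_add_distrib, Finset.sum_add_distrib,
      Finset.sum_ite_mem, Finset.sum_ite_mem, Finset.sum_ite_mem, Finset.sum_ite_mem,
      Finset.inter_eq_right.mpr hBsub, Finset.inter_eq_right.mpr hDsub]
    rw [bnd1]
    simp only [face]
    rw [Finset.sum_add_distrib, Finset.sum_add_distrib]
    abel
  · rw [if_neg hc]
    have hz : ∀ (x : ℕ) (s d : Bool), ff n G K i j D x s d = 0 := fun x s d => by
      rw [ff, if_neg (fun hh => hc hh.1)]
    simp [hz]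

set_option maxHeartbeats 2000000 in
/-- For every `G ⊆ [n]` with `|G| ≥ 2`, the chain `γ_G` is a cycle. -/
theorem gamma_is_cycle (n : ℕ) (hn : 2 ≤ n) (G : Finset ℕ)
    (hG : G ⊆ Finset.Icc 1 n) (hcard : 2 ≤ G.card) :
    bnd (gamma n G) = 0 := by
  set K := Finset.Icc (sInf (↑G : Set ℕ)) (sSup (↑G : Set ℕ)) with hKdef
  have hGne : (↑G : Set ℕ).Nonempty := by
    rw [Finset.coe_nonempty]
    exact Finset.card_pos.mp (lt_of_lt_of_le two_pos hcard)
  have haG : sInf (↑G : Set ℕ) ∈ G := by exact_mod_cast Nat.sInf_mem hGne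
  have hcG : sSup (↑G : Set ℕ) ∈ G := by
    have := Set.Nonempty.csSup_mem hGne G.finite_toSet
    exact_mod_cast this
  have hGK : G ⊆ K := by
    intro g hg
    rw [hKdef, Finset.mem_Icc]
    exact ⟨Nat.sInf_le (by exact_mod_cast hg),
      le_csSup G.finite_toSet.bddAbove (by exact_mod_cast hg)⟩
  have hK : K ⊆ Finset.Icc 1 n := by
    intro y hy
    rw [hKdef, Finset.mem_Icc] at hy
    have h1 := hG haG
    have h2 := hG hcG
    rw [Finset.mem_Icc] at h1 h2 ⊢
    omega
  have hIEsub : (K \ G) ∪ (Finset.Icc 1 n \ K) ⊆ Finset.Icc 1 n := by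
    intro y hy
    rcases Finset.mem_union.mp hy with h | h
    · exact hK (Finset.mem_sdiff.mp h).1
    · exact (Finset.mem_sdiff.mp h).1
  have hgamma : gamma n G = ∑ i ∈ K, ∑ j ∈ K, ∑ D ∈ ((K \ G) ∪ (Finset.Icc 1 n \ K)).powerset,
      if i ≠ j ∧ i ∉ D ∧ j ∉ D ∧ Finset.Icc 1 n \ ({i} ∪ {j} ∪ D) ⊆ G ∪
          (Finset.Icc 1 n \ K) then
        Finsupp.single ⟨{i}, Finset.Icc 1 n \ ({i} ∪ {j} ∪ D), {j}, D⟩ 1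
      else 0 := rfl
  have h1 : bnd (gamma n G) =
      ∑ i ∈ K, ∑ j ∈ K, ∑ D ∈ ((K \ G) ∪ (Finset.Icc 1 n \ K)).powerset,
        if gcond n G K i j D then bnd1 ⟨{i}, Bset n i j D, {j}, D⟩ else 0 := by
    rw [hgamma]
    simp only [map_sum, apply_ite bnd, map_zero, bnd_single]
    refine Finset.sum_congr rfl fun i hi => Finset.sum_congr rfl fun j hj =>
      Finset.sum_congr rfl fun D hD => ?_
    simp only [Bset]
    exact if_congr (cond_iff n G K hGK hK i j D hi hj (Finset.mem_powerset.mp hD)) rfl rfl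
  have h2 : bnd (gamma n G) =
      ∑ i ∈ Finset.Icc 1 n, ∑ j ∈ Finset.Icc 1 n, ∑ D ∈ (Finset.Icc 1 n).powerset,
        if gcond n G K i j D then bnd1 ⟨{i}, Bset n i j D, {j}, D⟩ else 0 := by
    rw [h1]
    rw [Finset.sum_subset hK (fun i _ hiK => Finset.sum_eq_zero fun j _ =>
      Finset.sum_eq_zero fun D _ => if_neg fun hgc => hiK hgc.1)]
    refine Finset.sum_congr rfl fun i _ => ?_
    rw [Finset.sum_subset hK (fun j _ hjK => Finset.sum_eq_zero fun D _ =>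
      if_neg fun hgc => hjK hgc.2.1)]
    refine Finset.sum_congr rfl fun j _ => ?_
    rw [Finset.sum_subset (Finset.powerset_mono.mpr hIEsub) (fun D _ hDp =>
      if_neg fun hgc => hDp (Finset.mem_powerset.mpr (gcond_D_sub hgc)))]
  have h3 : bnd (gamma n G) =
      ∑ p ∈ (Finset.Icc 1 n ×ˢ (Finset.Icc 1 n ×ˢ ((Finset.Icc 1 n).powerset ×ˢ
          (Finset.Icc 1 n ×ˢ (Finset.univ : Finset (Bool × Bool)))))),
        ff n G K p.1 p.2.1 p.2.2.1 p.2.2.2.1 p.2.2.2.2.1 p.2.2.2.2.2 := by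
    rw [h2]
    simp only [Finset.sum_product]
    refine Finset.sum_congr rfl fun i _ => Finset.sum_congr rfl fun j _ =>
      Finset.sum_congr rfl fun D _ => ?_
    exact expand n G K i j D
  rw [h3]
  refine Finset.sum_involution
    (fun p _ => if gfcond n G K p.1 p.2.1 p.2.2.1 p.2.2.2.1 p.2.2.2.2.2 then
        ptr G K p.1 p.2.1 p.2.2.1 p.2.2.2.1 p.2.2.2.2.1 p.2.2.2.2.2 else p)
    ?_ ?_ ?_ ?_
  · rintro ⟨i, j, D, x, s, d⟩ hp
    dsimp only
    by_cases hfc : gfcond n G K i j D x d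
    · obtain ⟨hne, hfc', hface, hback⟩ := key n G K hGK hK i j D x s d hfc
        (ptr G K i j D x s d).1 (ptr G K i j D x s d).2.1 (ptr G K i j D x s d).2.2.1
        (ptr G K i j D x s d).2.2.2.1 (ptr G K i j D x s d).2.2.2.2.1
        (ptr G K i j D x s d).2.2.2.2.2 rfl
      rw [if_pos hfc]
      show ff n G K i j D x s d + ff n G K (ptr G K i j D x s d).1 (ptr G K i j D x s d).2.1
        (ptr G K i j D x s d).2.2.1 (ptr G K i j D x s d).2.2.2.1
        (ptr G K i j D x s d).2.2.2.2.1 (ptr G K i j D x s d).2.2.2.2.2 = 0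
      rw [ff, if_pos hfc, ff, if_pos hfc', hface, ← Finsupp.single_add]
      have : (1 + 1 : ZMod 2) = 0 := rfl
      rw [this, Finsupp.single_zero]
    · rw [if_neg hfc]
      have hz : ff n G K i j D x s d = 0 := by rw [ff, if_neg hfc]
      rw [hz, add_zero]
  · rintro ⟨i, j, D, x, s, d⟩ hp hFne
    dsimp only at hFne ⊢
    by_cases hfc : gfcond n G K i j D x d
    · rw [if_pos hfc]
      obtain ⟨hne, -, -, -⟩ := key n G K hGK hK i j D x s d hfc
        (ptr G K i j D x s d).1 (ptr G K i j D x s d).2.1 (ptr G K i j D x s d).2.2.1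
        (ptr G K i j D x s d).2.2.2.1 (ptr G K i j D x s d).2.2.2.2.1
        (ptr G K i j D x s d).2.2.2.2.2 rfl
      exact hne
    · exact absurd (by rw [ff, if_neg hfc]) hFne
  · rintro ⟨i, j, D, x, s, d⟩ hp
    dsimp only
    by_cases hfc : gfcond n G K i j D x d
    · rw [if_pos hfc]
      obtain ⟨-, hfc', -, -⟩ := key n G K hGK hK i j D x s d hfc
        (ptr G K i j D x s d).1 (ptr G K i j D x s d).2.1 (ptr G K i j D x s d).2.2.1
        (ptr G K i j D x s d).2.2.2.1 (ptr G K i j D x s d).2.2.2.2.1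
        (ptr G K i j D x s d).2.2.2.2.2 rfl
      have hm := mem_ranges n G K hK hfc'
      exact Finset.mem_product.mpr ⟨hm.1, Finset.mem_product.mpr ⟨hm.2.1,
        Finset.mem_product.mpr ⟨Finset.mem_powerset.mpr hm.2.2.1,
        Finset.mem_product.mpr ⟨hm.2.2.2, Finset.mem_univ _⟩⟩⟩⟩
    · rw [if_neg hfc]
      exact hp
  · rintro ⟨i, j, D, x, s, d⟩ hp
    dsimp only
    by_cases hfc : gfcond n G K i j D x d
    · obtain ⟨-, hfc', -, hback⟩ := key n G K hGK hK i j D x s d hfc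
        (ptr G K i j D x s d).1 (ptr G K i j D x s d).2.1 (ptr G K i j D x s d).2.2.1
        (ptr G K i j D x s d).2.2.2.1 (ptr G K i j D x s d).2.2.2.2.1
        (ptr G K i j D x s d).2.2.2.2.2 rfl
      simp only [if_pos hfc]
      rw [if_pos hfc']
      exact hback
    · simp only [if_neg hfc]
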